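/- arXiv:1406.5778 — 2 statements merged into one kernel-verified Lean document; each statement's English description precedes it below -/
import Mathlib

section
/- Let X and Y be compact convex subsets of ℝ² and let α ∈ ℝ. Then the superlevel set {t ∈ ℝ² : area(X ∩ (t + Y)) ≥ α} of the overlap function is a convex subset of ℝ². -/
open MeasureTheory Pointwise

noncomputable section

abbrev Plane := EuclideanSpace ℝ (Fin 2)

/-!
Put `t = a • t₁ + b • t₂`. Then `X ∩ (t +ᵥ Y)` contains `a • (X ∩ (t₁ +ᵥ Y)) + b • (X ∩ (t₂ +ᵥ Y))`,
so it suffices to prove the weak Brunn–Minkowski inequality `min |A| |B| ≤ |C|` for compact `A`, `B`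
and a compact convex `C ⊇ a • A + b • B` in the plane.

Slice vertically. By Brunn–Minkowski on the line the slice widths satisfy
`a w_A(x₁) + b w_B(x₂) ≤ w_C(a x₁ + b x₂)`, so `a • {w_A > σ} + b • {w_B > τ} ⊆ {w_C > a σ + b τ}`,
and, the last set being an interval, the line inequality applies once more to these superlevel
sets. Measuring levels in units of the maximal widths `M_A`, `M_B` and `a M_A + b M_B` (so that
the superlevel sets of `w_A` and `w_B` are nonempty at the same levels), the layer-cake formula
turns this into `|C| ≥ (a M_A + b M_B) (a |A| / M_A + b |B| / M_B)`, and the right-hand side is at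
least `min |A| |B|` by the Cauchy–Schwarz inequality.
-/

open Set Bornology Metric ENNReal

namespace Real

theorem volume_eq_ediam_of_convex {s : Set ℝ} (hs : Convex ℝ s) (hsb : IsBounded s) :
    volume s = ediam s := by
  refine le_antisymm (volume_le_diam s) ?_
  rcases s.eq_empty_or_nonempty with rfl | hne
  · simp
  rw [ediam_eq hsb, ← volume_Ioo]
  exact measure_mono
    (IsConnected.Ioo_csInf_csSup_subset ⟨hne, hs.isPreconnected⟩ hsb.bddBelow hsb.bddAbove)

theorem ediam_smul_add_smul {s t : Set ℝ} (hs : s.Nonempty) (ht : t.Nonempty)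
    (hsb : IsBounded s) (htb : IsBounded t) {a b : ℝ} (ha : 0 ≤ a) (hb : 0 ≤ b) :
    ediam (a • s + b • t) = ENNReal.ofReal a * ediam s + ENNReal.ofReal b * ediam t := by
  have has := hsb.smul₀ a
  have hbt := htb.smul₀ b
  rw [ediam_eq (has.add hbt), ediam_eq hsb, ediam_eq htb,
    csSup_add (hs.smul_set) has.bddAbove (ht.smul_set) hbt.bddAbove,
    csInf_add (hs.smul_set) has.bddBelow (ht.smul_set) hbt.bddBelow,
    sSup_smul_of_nonneg ha, sSup_smul_of_nonneg hb, sInf_smul_of_nonneg ha,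
    sInf_smul_of_nonneg hb, ← ofReal_mul ha, ← ofReal_mul hb,
    ← ofReal_add (mul_nonneg ha (sub_nonneg.2 (sInf_le_sSup s hsb.bddBelow hsb.bddAbove)))
      (mul_nonneg hb (sub_nonneg.2 (sInf_le_sSup t htb.bddBelow htb.bddAbove)))]
  congr 1
  simp only [smul_eq_mul]
  ring

/-- Brunn–Minkowski on the line. -/
theorem ofReal_mul_volume_add_ofReal_mul_volume_le {s t u : Set ℝ} (hs : s.Nonempty)
    (ht : t.Nonempty) (hsb : IsBounded s) (htb : IsBounded t) (hu : Convex ℝ u)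
    (hub : IsBounded u) {a b : ℝ} (ha : 0 ≤ a) (hb : 0 ≤ b) (h : a • s + b • t ⊆ u) :
    ENNReal.ofReal a * volume s + ENNReal.ofReal b * volume t ≤ volume u :=
  calc ENNReal.ofReal a * volume s + ENNReal.ofReal b * volume t
      ≤ ENNReal.ofReal a * ediam s + ENNReal.ofReal b * ediam t := by
        gcongr <;> exact volume_le_diam _
    _ = ediam (a • s + b • t) := (ediam_smul_add_smul hs ht hsb htb ha hb).symm
    _ ≤ ediam u := ediam_mono h
    _ = volume u := (volume_eq_ediam_of_convex hu hub).symm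

end Real

theorem one_le_add_mul_add_div {x y a b : ℝ} (hx : 0 < x) (hy : 0 < y) (ha : 0 ≤ a)
    (hb : 0 ≤ b) (hab : a + b = 1) : 1 ≤ (a * x + b * y) * (a / x + b / y) := by
  have hexpand :
      (a * x + b * y) * (a / x + b / y) = (a + b) ^ 2 + a * b * (x - y) ^ 2 / (x * y) := by
    field_simp
    ring
  have hgap : 0 ≤ a * b * (x - y) ^ 2 / (x * y) := by positivity
  rw [hexpand, hab]
  linarith

theorem lintegral_ofReal_eq_ofReal_mul_lintegral_meas_lt {α : Type*} [MeasurableSpace α]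
    (μ : Measure α) {f : α → ℝ} (hf0 : 0 ≤ f) (hf : Measurable f) {M : ℝ} (hM : 0 < M) :
    ∫⁻ x, ENNReal.ofReal (f x) ∂μ
      = ENNReal.ofReal M * ∫⁻ s in Ioi 0, μ {x | M * s < f x} := by
  have hf' : 0 ≤ fun x => f x / M := fun x => div_nonneg (hf0 x) hM.le
  simp_rw [← lt_div_iff₀' hM]
  rw [← lintegral_eq_lintegral_meas_lt μ (Filter.Eventually.of_forall hf')
    (hf.div_const M).aemeasurable, ← lintegral_const_mul' _ _ ofReal_ne_top]
  refine lintegral_congr fun x => ?_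
  rw [← ofReal_mul hM.le, mul_div_cancel₀ _ hM.ne']

theorem ENNReal.min_le_ofReal_mul_add {u v : ℝ≥0∞} {x y a b : ℝ} (hx : 0 < x) (hy : 0 < y)
    (ha : 0 ≤ a) (hb : 0 ≤ b) (hab : a + b = 1) :
    min (ENNReal.ofReal x * u) (ENNReal.ofReal y * v)
      ≤ ENNReal.ofReal (a * x + b * y) * (ENNReal.ofReal a * u + ENNReal.ofReal b * v) := by
  set M := a * x + b * y
  have hM : 0 ≤ M := by positivity
  have hcancel : ∀ {z c : ℝ}, 0 < z → 0 ≤ c →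
      ENNReal.ofReal (M * c / z) * ENNReal.ofReal z = ENNReal.ofReal M * ENNReal.ofReal c := by
    intro z c hz hc
    rw [← ofReal_mul (by positivity), ← ofReal_mul hM, div_mul_cancel₀ _ hz.ne']
  calc min (ENNReal.ofReal x * u) (ENNReal.ofReal y * v)
      = ENNReal.ofReal 1 * min (ENNReal.ofReal x * u) (ENNReal.ofReal y * v) := by simp
    _ ≤ ENNReal.ofReal (M * a / x + M * b / y)
          * min (ENNReal.ofReal x * u) (ENNReal.ofReal y * v) := by
        gcongr
        calc (1 : ℝ) ≤ M * (a / x + b / y) := one_le_add_mul_add_div hx hy ha hb hab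
          _ = M * a / x + M * b / y := by ring
    _ ≤ ENNReal.ofReal (M * a / x) * (ENNReal.ofReal x * u)
          + ENNReal.ofReal (M * b / y) * (ENNReal.ofReal y * v) := by
        rw [ofReal_add (by positivity) (by positivity), add_mul]
        gcongr
        exacts [min_le_left _ _, min_le_right _ _]
    _ = ENNReal.ofReal M * (ENNReal.ofReal a * u + ENNReal.ofReal b * v) := by
        rw [← mul_assoc, ← mul_assoc, hcancel hx ha, hcancel hy hb]
        ring

def sliceWidth (A : Set (ℝ × ℝ)) (x : ℝ) : ℝ := (volume (Prod.mk x ⁻¹' A)).toReal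

def maxSliceWidth (A : Set (ℝ × ℝ)) : ℝ := ⨆ x, sliceWidth A x

section SliceWidth

variable {A B C : Set (ℝ × ℝ)} {a b : ℝ}

theorem sliceWidth_nonneg (A : Set (ℝ × ℝ)) (x : ℝ) : 0 ≤ sliceWidth A x := toReal_nonneg

theorem slice_subset_image_snd (A : Set (ℝ × ℝ)) (x : ℝ) :
    Prod.mk x ⁻¹' A ⊆ Prod.snd '' A :=
  fun y hy => ⟨(x, y), hy, rfl⟩

theorem isBounded_slice (hA : IsCompact A) (x : ℝ) : IsBounded (Prod.mk x ⁻¹' A) :=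
  (hA.image continuous_snd).isBounded.subset (slice_subset_image_snd A x)

theorem sliceWidth_le (hA : IsCompact A) (x : ℝ) :
    sliceWidth A x ≤ (volume (Prod.snd '' A)).toReal :=
  toReal_mono (hA.image continuous_snd).measure_lt_top.ne
    (measure_mono (slice_subset_image_snd A x))

theorem nonempty_slice_of_sliceWidth_pos {x : ℝ} (h : 0 < sliceWidth A x) :
    (Prod.mk x ⁻¹' A).Nonempty :=
  nonempty_of_measure_ne_zero (toReal_pos_iff.1 h).1.ne'

theorem volume_eq_lintegral_sliceWidth (hA : IsCompact A) :
    volume A = ∫⁻ x, ENNReal.ofReal (sliceWidth A x) := by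
  rw [Measure.volume_eq_prod, Measure.prod_apply hA.measurableSet]
  refine lintegral_congr fun x => ?_
  rw [sliceWidth, ofReal_toReal (isBounded_slice hA x).measure_lt_top.ne]

theorem volume_eq_ofReal_mul_lintegral_superlevel (hA : IsCompact A) {M : ℝ} (hM : 0 < M) :
    volume A = ENNReal.ofReal M * ∫⁻ s in Ioi 0, volume {x | M * s < sliceWidth A x} := by
  rw [volume_eq_lintegral_sliceWidth hA]
  exact lintegral_ofReal_eq_ofReal_mul_lintegral_meas_lt _ (sliceWidth_nonneg A)
    (measurable_measure_prodMk_left hA.measurableSet).ennreal_toReal hM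

theorem smul_slice_add_smul_slice_subset (h : a • A + b • B ⊆ C) (x₁ x₂ : ℝ) :
    a • (Prod.mk x₁ ⁻¹' A) + b • (Prod.mk x₂ ⁻¹' B) ⊆ Prod.mk (a * x₁ + b * x₂) ⁻¹' C := by
  rintro _ ⟨_, ⟨y₁, hy₁, rfl⟩, _, ⟨y₂, hy₂, rfl⟩, rfl⟩
  simpa using
    h (add_mem_add (smul_mem_smul_set (a := a) hy₁) (smul_mem_smul_set (a := b) hy₂))

theorem Convex.slice (hC : Convex ℝ C) (x : ℝ) : Convex ℝ (Prod.mk x ⁻¹' C) :=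
  convex_iff_pointwise_add_subset.2 fun a b ha hb hab => by
    simpa [← add_mul, hab] using
      smul_slice_add_smul_slice_subset (hC.set_combo_subset ha hb hab) x x

theorem add_mul_sliceWidth_le (hA : IsCompact A) (hB : IsCompact B) (hC : IsCompact C)
    (hCc : Convex ℝ C) (ha : 0 ≤ a) (hb : 0 ≤ b) (h : a • A + b • B ⊆ C) {x₁ x₂ : ℝ}
    (h₁ : (Prod.mk x₁ ⁻¹' A).Nonempty) (h₂ : (Prod.mk x₂ ⁻¹' B).Nonempty) :
    a * sliceWidth A x₁ + b * sliceWidth B x₂ ≤ sliceWidth C (a * x₁ + b * x₂) := by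
  have hslice := Real.ofReal_mul_volume_add_ofReal_mul_volume_le h₁ h₂ (isBounded_slice hA x₁)
    (isBounded_slice hB x₂) (hCc.slice _) (isBounded_slice hC _) ha hb
    (smul_slice_add_smul_slice_subset h x₁ x₂)
  have := toReal_mono (isBounded_slice hC _).measure_lt_top.ne hslice
  rwa [toReal_add (mul_ne_top ofReal_ne_top (isBounded_slice hA x₁).measure_lt_top.ne)
    (mul_ne_top ofReal_ne_top (isBounded_slice hB x₂).measure_lt_top.ne), toReal_mul, toReal_mul,
    toReal_ofReal ha, toReal_ofReal hb] at this

theorem smul_superlevel_add_smul_superlevel_subset (hA : IsCompact A) (hB : IsCompact B)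
    (hC : IsCompact C) (hCc : Convex ℝ C) (ha : 0 ≤ a) (hb : 0 ≤ b) (hab : a + b = 1)
    (h : a • A + b • B ⊆ C) {σ τ : ℝ} (hσ : 0 ≤ σ) (hτ : 0 ≤ τ) :
    a • {x | σ < sliceWidth A x} + b • {x | τ < sliceWidth B x}
      ⊆ {x | a * σ + b * τ < sliceWidth C x} := by
  rintro _ ⟨_, ⟨x₁, hx₁, rfl⟩, _, ⟨x₂, hx₂, rfl⟩, rfl⟩
  have hw := add_mul_sliceWidth_le hA hB hC hCc ha hb h
    (nonempty_slice_of_sliceWidth_pos (hσ.trans_lt hx₁))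
    (nonempty_slice_of_sliceWidth_pos (hτ.trans_lt hx₂))
  have hgap :=
    convex_Ioi (0 : ℝ) (mem_Ioi.2 (sub_pos.2 hx₁)) (mem_Ioi.2 (sub_pos.2 hx₂)) ha hb hab
  simp only [mem_Ioi, smul_eq_mul] at hgap
  simp only [mem_ofPred_eq, smul_eq_mul]
  linarith

theorem convex_superlevel_sliceWidth (hC : IsCompact C) (hCc : Convex ℝ C) {τ : ℝ}
    (hτ : 0 ≤ τ) : Convex ℝ {x | τ < sliceWidth C x} :=
  convex_iff_pointwise_add_subset.2 fun a b ha hb hab => by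
    simpa [← add_mul, hab] using smul_superlevel_add_smul_superlevel_subset hC hC hC hCc
      ha hb hab (hCc.set_combo_subset ha hb hab) hτ hτ

theorem isBounded_superlevel_sliceWidth (hC : IsCompact C) {τ : ℝ} (hτ : 0 ≤ τ) :
    IsBounded {x | τ < sliceWidth C x} := by
  refine (hC.image continuous_fst).isBounded.subset fun x hx => ?_
  obtain ⟨y, hy⟩ := nonempty_slice_of_sliceWidth_pos (hτ.trans_lt hx)
  exact ⟨(x, y), hy, rfl⟩

theorem sliceWidth_le_maxSliceWidth (hA : IsCompact A) (x : ℝ) :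
    sliceWidth A x ≤ maxSliceWidth A :=
  le_ciSup ⟨_, forall_mem_range.2 (sliceWidth_le hA)⟩ x

theorem maxSliceWidth_pos (hA : IsCompact A) (h : volume A ≠ 0) : 0 < maxSliceWidth A := by
  by_contra! hM
  have hzero : ∀ x, sliceWidth A x = 0 := fun x =>
    ((sliceWidth_le_maxSliceWidth hA x).trans hM).antisymm (sliceWidth_nonneg A x)
  exact h (by simp [volume_eq_lintegral_sliceWidth hA, hzero])

theorem ofReal_mul_volume_superlevel_add_le (hA : IsCompact A) (hB : IsCompact B)
    (hC : IsCompact C) (hCc : Convex ℝ C) (ha : 0 ≤ a) (hb : 0 ≤ b) (hab : a + b = 1)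
    (h : a • A + b • B ⊆ C) (hMA : 0 < maxSliceWidth A) (hMB : 0 < maxSliceWidth B) {s : ℝ}
    (hs : 0 < s) :
    ENNReal.ofReal a * volume {x | maxSliceWidth A * s < sliceWidth A x}
        + ENNReal.ofReal b * volume {x | maxSliceWidth B * s < sliceWidth B x}
      ≤ volume {x | (a * maxSliceWidth A + b * maxSliceWidth B) * s < sliceWidth C x} := by
  rcases lt_or_ge s 1 with hs1 | hs1
  · have hne : ∀ {K : Set (ℝ × ℝ)}, 0 < maxSliceWidth K →
        {x | maxSliceWidth K * s < sliceWidth K x}.Nonempty :=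
      fun hM => exists_lt_of_lt_ciSup (mul_lt_of_lt_one_right hM hs1)
    have hsub := smul_superlevel_add_smul_superlevel_subset hA hB hC hCc ha hb hab h
      (mul_nonneg hMA.le hs.le) (mul_nonneg hMB.le hs.le)
    rw [show a * (maxSliceWidth A * s) + b * (maxSliceWidth B * s)
      = (a * maxSliceWidth A + b * maxSliceWidth B) * s by ring] at hsub
    have hτ : 0 ≤ (a * maxSliceWidth A + b * maxSliceWidth B) * s := by positivity
    exact Real.ofReal_mul_volume_add_ofReal_mul_volume_le (hne hMA) (hne hMB)
      (isBounded_superlevel_sliceWidth hA (by positivity))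
      (isBounded_superlevel_sliceWidth hB (by positivity))
      (convex_superlevel_sliceWidth hC hCc hτ) (isBounded_superlevel_sliceWidth hC hτ)
      ha hb hsub
  · have hempty : ∀ {K : Set (ℝ × ℝ)}, IsCompact K → 0 ≤ maxSliceWidth K →
        {x | maxSliceWidth K * s < sliceWidth K x} = ∅ :=
      fun hK hM => eq_empty_iff_forall_notMem.2 fun x hx =>
        ((sliceWidth_le_maxSliceWidth hK x).trans (le_mul_of_one_le_right hM hs1)).not_gt hx
    simp [hempty hA hMA.le, hempty hB hMB.le]

end SliceWidth

theorem min_volume_le_volume_of_smul_add_smul_subset {A B C : Set (ℝ × ℝ)} (hA : IsCompact A)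
    (hB : IsCompact B) (hC : IsCompact C) (hCc : Convex ℝ C) {a b : ℝ} (ha : 0 ≤ a) (hb : 0 ≤ b)
    (hab : a + b = 1) (h : a • A + b • B ⊆ C) : min (volume A) (volume B) ≤ volume C := by
  rcases eq_or_ne (volume A) 0 with hA0 | hA0
  · simp [hA0]
  rcases eq_or_ne (volume B) 0 with hB0 | hB0
  · simp [hB0]
  have hMA := maxSliceWidth_pos hA hA0
  have hMB := maxSliceWidth_pos hB hB0
  have hM : 0 < a * maxSliceWidth A + b * maxSliceWidth B := by
    simpa using convex_Ioi (0 : ℝ) (mem_Ioi.2 hMA) (mem_Ioi.2 hMB) ha hb hab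
  rw [volume_eq_ofReal_mul_lintegral_superlevel hA hMA,
    volume_eq_ofReal_mul_lintegral_superlevel hB hMB,
    volume_eq_ofReal_mul_lintegral_superlevel hC hM]
  refine (ENNReal.min_le_ofReal_mul_add hMA hMB ha hb hab).trans (mul_le_mul_right ?_ _)
  rw [← lintegral_const_mul' _ _ ofReal_ne_top, ← lintegral_const_mul' _ _ ofReal_ne_top]
  exact (le_lintegral_add _ _).trans (setLIntegral_mono' measurableSet_Ioi fun s hs =>
    ofReal_mul_volume_superlevel_add_le hA hB hC hCc ha hb hab h hMA hMB hs)

theorem Plane.min_volume_le_volume_of_smul_add_smul_subset {A B C : Set Plane}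
    (hA : IsCompact A) (hB : IsCompact B) (hC : IsCompact C) (hCc : Convex ℝ C) {a b : ℝ}
    (ha : 0 ≤ a) (hb : 0 ≤ b) (hab : a + b = 1) (h : a • A + b • B ⊆ C) :
    min (volume A) (volume B) ≤ volume C := by
  let e : (ℝ × ℝ) ≃L[ℝ] Plane :=
    (ContinuousLinearEquiv.finTwoArrow ℝ ℝ).symm.trans (EuclideanSpace.equiv (Fin 2) ℝ).symm
  have he : MeasurePreserving e :=
    (PiLp.volume_preserving_toLp (Fin 2)).comp (volume_preserving_finTwoArrow ℝ).symm
  have hvol : ∀ {K : Set Plane}, IsCompact K → volume (e ⁻¹' K) = volume K :=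
    fun hK => he.measure_preimage hK.measurableSet.nullMeasurableSet
  have hcpt : ∀ {K : Set Plane}, IsCompact K → IsCompact (e ⁻¹' K) :=
    fun hK => e.toHomeomorph.isCompact_preimage.2 hK
  rw [← hvol hA, ← hvol hB, ← hvol hC]
  refine _root_.min_volume_le_volume_of_smul_add_smul_subset (hcpt hA) (hcpt hB) (hcpt hC)
    (hCc.linear_preimage e.toLinearMap) ha hb hab ?_
  rintro _ ⟨_, ⟨p, hp, rfl⟩, _, ⟨q, hq, rfl⟩, rfl⟩
  simpa using
    h (add_mem_add (smul_mem_smul_set (a := a) hp) (smul_mem_smul_set (a := b) hq))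

theorem Convex.smul_inter_vadd_add_smul_inter_vadd_subset {E : Type*} [AddCommGroup E]
    [Module ℝ E] {X Y : Set E} (hX : Convex ℝ X) (hY : Convex ℝ Y) {a b : ℝ} (ha : 0 ≤ a)
    (hb : 0 ≤ b) (hab : a + b = 1) (t₁ t₂ : E) :
    a • (X ∩ (t₁ +ᵥ Y)) + b • (X ∩ (t₂ +ᵥ Y)) ⊆ X ∩ ((a • t₁ + b • t₂) +ᵥ Y) := by
  rintro _ ⟨_, ⟨_, ⟨hpX, y₁, hy₁, rfl⟩, rfl⟩, _, ⟨_, ⟨hqX, y₂, hy₂, rfl⟩, rfl⟩, rfl⟩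
  refine ⟨hX hpX hqX ha hb hab, a • y₁ + b • y₂, hY hy₁ hy₂ ha hb hab, ?_⟩
  simp only [vadd_eq_add, smul_add]
  abel

theorem overlap_superlevel_convex (X Y : Set Plane)
    (hXcomp : IsCompact X) (hXconv : Convex ℝ X)
    (hYcomp : IsCompact Y) (hYconv : Convex ℝ Y) (α : ℝ) :
    Convex ℝ {t : Plane | α ≤ (volume (X ∩ (t +ᵥ Y))).toReal} := by
  intro t₁ ht₁ t₂ ht₂ a b ha hb hab
  have hK : ∀ t : Plane, IsCompact (X ∩ (t +ᵥ Y)) :=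
    fun t => hXcomp.inter_right (hYcomp.vadd t).isClosed
  have hmin := Plane.min_volume_le_volume_of_smul_add_smul_subset (hK t₁) (hK t₂) (hK _)
    (hXconv.inter (hYconv.vadd _)) ha hb hab
    (hXconv.smul_inter_vadd_add_smul_inter_vadd_subset hYconv ha hb hab t₁ t₂)
  calc α ≤ min (volume (X ∩ (t₁ +ᵥ Y))).toReal (volume (X ∩ (t₂ +ᵥ Y))).toReal :=
        le_min ht₁ ht₂
    _ = (min (volume (X ∩ (t₁ +ᵥ Y))) (volume (X ∩ (t₂ +ᵥ Y)))).toReal :=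
      (toReal_min (hK t₁).measure_lt_top.ne (hK t₂).measure_lt_top.ne).symm
    _ ≤ _ := toReal_mono (hK _).measure_lt_top.ne hmin
end
end

section
/- Let X and Y be compact convex subsets of ℝ² with nonempty interiors such that: (i) X is not contained under translation in Y; (ii) Y is not contained under translation in X; and (iii) for every t ∈ ℝ², the intersection X ∩ (t + Y) is contained under translation in the unit square [0,1]². Then the width of X is at most 7 and the width of Y is at most 7. -/
/-
If `width X > 7`, let `pq` be a diameter of `X`, of length `m > 7`, and let `zp`, `zm` be the points
of `X` extreme on either side of the line `pq`, at heights `a` and `b` with `a + b > 7`. As no chord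
of `X` is longer than `m`, neither point leans far beyond `p` or `q`, and the triangles `p q zp` and
`p q zm`, which lie in `X`, together contain the disk of radius `283/200` about the average of the
four points. Since `283/200 > √2`, the diameter of the unit square, no translate of `Y` can meet
this disk in a chord of length `283/200`; by convexity every chord of `Y` is then at most `√2`, so
`Y` fits into the disk, hence into `X`. Exchanging `X` and `Y` bounds the width of `Y`.
-/

open MeasureTheory Pointwise

noncomputable section

/-- The width of a set `K ⊆ ℝ²`: the infimum over unit vectors `u` of the
extent of `K` in the direction `u`. -/
noncomputable def width (K : Set Plane) : ℝ :=
  sInf {w : ℝ | ∃ u : Plane, ‖u‖ = 1 ∧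
    w = sSup ((fun p => (inner ℝ p u : ℝ)) '' K) - sInf ((fun p => (inner ℝ p u : ℝ)) '' K)}

/-- `A` is contained under translation in `B`. -/
def ContainedUnderTranslation (A B : Set Plane) : Prop :=
  ∃ v : Plane, v +ᵥ A ⊆ B

/-- The unit square `[0,1]²` in the plane. -/
def unitSquare : Set Plane := {p : Plane | ∀ i, p i ∈ Set.Icc (0 : ℝ) 1}

open scoped RealInnerProductSpace

section MarginInequalities

variable {a b m s x x' ξ η : ℝ}

/- Up to a factor `4` and a dropped nonnegative term, `upper_edge_margin` bounds from below the
distance from `((m + x + x') / 4, (a - b) / 4)` to the line through `(0, 0)` and `(x, a)`, and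
`lower_edge_margin` (with `x'` renamed `x`) the distance to the line through `(0, 0)` and
`(x', -b)`. The `_sq` versions are these bounds multiplied by the square root. -/

lemma upper_edge_margin_sq_reduced (ha : 7 / 2 ≤ a) (hsa : a ≤ s) :
    283 / 50 * s ^ 2 ≤ a * max 7 s * s + max 0 (7 - a) * (s ^ 2 - a ^ 2) := by
  rcases le_total s 7 with h7 | h7
  · rw [max_eq_left h7, max_eq_right (by linarith)]
    nlinarith [mul_nonneg (mul_nonneg (sub_nonneg.2 h7) (sub_nonneg.2 hsa))
        (by linarith : (0:ℝ) ≤ a - 67 / 50),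
      mul_nonneg (sq_nonneg (a - 14 / 3)) (by linarith : (0:ℝ) ≤ a + 7 / 3)]
  rw [max_eq_right h7]
  rcases le_total a 7 with ha7 | ha7
  · rw [max_eq_right (by linarith)]
    nlinarith [mul_nonneg (sq_nonneg (a - 14 / 3)) (by linarith : (0:ℝ) ≤ a + 7 / 3),
      mul_nonneg (mul_nonneg (by linarith : (0:ℝ) ≤ s + 7) (sub_nonneg.2 h7))
        (by linarith : (0:ℝ) ≤ 7 - a + 67 / 50)]
  · rw [max_eq_left (by linarith)]
    nlinarith

lemma upper_edge_margin_sq (hb : 0 ≤ b) (hba : b ≤ a) (hab : 7 ≤ a + b) (hm : 7 ≤ m)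
    (hsa : a ≤ s) (hsm : s ≤ m) :
    283 / 50 * s ^ 2 ≤ a * m * s + b * (s ^ 2 - a ^ 2) := by
  have ha : 7 / 2 ≤ a := by linarith
  have hM : a * max 7 s * s ≤ a * m * s :=
    mul_le_mul_of_nonneg_right (mul_le_mul_of_nonneg_left (max_le hm hsm) (by linarith))
      (by linarith)
  have hB : max 0 (7 - a) * (s ^ 2 - a ^ 2) ≤ b * (s ^ 2 - a ^ 2) :=
    mul_le_mul_of_nonneg_right (max_le hb (by linarith)) (by nlinarith)
  linarith [upper_edge_margin_sq_reduced ha hsa]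

lemma lower_edge_margin_sq_reduced (hb : 0 ≤ b) (hba : b ≤ a) (hab : 7 ≤ a + b)
    (hA : a < 283 / 50) (hsb : b ≤ s) :
    283 / 50 * s ^ 2 ≤ b * max 7 s * s + a * (s ^ 2 - b ^ 2) := by
  have hq : 0 ≤ 21 / 2 * a - a ^ 2 - 49 / 4 := by
    nlinarith [mul_nonneg (by linarith : (0:ℝ) ≤ a - 7 / 2)
      (by linarith : (0:ℝ) ≤ 283 / 50 - a)]
  have hb7 : 0 ≤ a * (a - b) * (b - (7 - a)) :=
    mul_nonneg (mul_nonneg (by linarith) (sub_nonneg.2 hba)) (by linarith)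
  rcases le_total s 7 with h7 | h7
  · rw [max_eq_left h7]
    nlinarith [mul_nonneg (mul_nonneg (sub_nonneg.2 h7) (sub_nonneg.2 hsb))
        (by linarith : (0:ℝ) ≤ 283 / 50 - a),
      mul_nonneg (by linarith : (0:ℝ) ≤ a - 7 / 2) hq,
      mul_nonneg (mul_nonneg (sub_nonneg.2 h7) (sub_nonneg.2 hsb)) hb,
      sq_nonneg (s - b), sq_nonneg (7 - s), mul_nonneg hb (sub_nonneg.2 hsb)]
  · rw [max_eq_right h7]
    nlinarith [mul_nonneg (mul_nonneg (by linarith : (0:ℝ) ≤ s + 7) (sub_nonneg.2 h7))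
        (by linarith : (0:ℝ) ≤ a + b - 283 / 50),
      mul_nonneg (by linarith : (0:ℝ) ≤ a - 7 / 2) hq]

lemma lower_edge_margin_sq (hb : 0 ≤ b) (hba : b ≤ a) (hab : 7 ≤ a + b) (hm : 7 ≤ m)
    (hmab : a + b ≤ m) (hsb : b ≤ s) (hsm : s ≤ m) :
    283 / 50 * s ^ 2 ≤ b * m * s + a * (s ^ 2 - b ^ 2) := by
  have hs : 0 ≤ s := hb.trans hsb
  rcases le_or_gt (283 / 50) a with hA | hA
  · nlinarith [mul_le_mul (by linarith : a ≤ m) hsb hb (by linarith), mul_nonneg hb hs]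
  have hM : b * max 7 s * s ≤ b * m * s :=
    mul_le_mul_of_nonneg_right (mul_le_mul_of_nonneg_left (max_le hm hsm) hb) hs
  linarith [lower_edge_margin_sq_reduced hb hba hab hA hsb]

lemma upper_edge_margin (hb : 0 ≤ b) (hba : b ≤ a) (hab : 7 ≤ a + b) (hm : 7 ≤ m)
    (hx : 0 ≤ x) (hxm : x ^ 2 + a ^ 2 ≤ m ^ 2) :
    283 / 50 * √(x ^ 2 + a ^ 2) ≤ a * m + b * x := by
  set s := √(x ^ 2 + a ^ 2)
  have hs2 : s ^ 2 = x ^ 2 + a ^ 2 := Real.sq_sqrt (by positivity)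
  have hsm : s ≤ m := (Real.sqrt_le_left (by linarith)).2 hxm
  have hsa : a ≤ s := by nlinarith [Real.sqrt_nonneg (x ^ 2 + a ^ 2)]
  have hsx : x ≤ s := by nlinarith [Real.sqrt_nonneg (x ^ 2 + a ^ 2)]
  nlinarith [upper_edge_margin_sq hb hba hab hm hsa hsm,
    mul_nonneg (mul_nonneg hb hx) (sub_nonneg.2 hsx)]

lemma lower_edge_margin (hb : 0 ≤ b) (hba : b ≤ a) (hab : 7 ≤ a + b) (hm : 7 ≤ m)
    (hmab : a + b ≤ m) (hx : 0 ≤ x) (hxm : x ^ 2 + b ^ 2 ≤ m ^ 2) :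
    283 / 50 * √(x ^ 2 + b ^ 2) ≤ b * m + a * x := by
  set s := √(x ^ 2 + b ^ 2)
  have hs0 : 0 ≤ s := Real.sqrt_nonneg _
  have hs2 : s ^ 2 = x ^ 2 + b ^ 2 := Real.sq_sqrt (by positivity)
  have hsm : s ≤ m := (Real.sqrt_le_left (by linarith)).2 hxm
  have hsb : b ≤ s := by nlinarith
  have hsx : x ≤ s := by nlinarith
  have ha : 0 ≤ a := hb.trans hba
  rcases hs0.eq_or_lt with hs | hs
  · rw [← hs]; nlinarith
  · nlinarith [lower_edge_margin_sq hb hba hab hm hmab hsb hsm,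
      mul_nonneg (mul_nonneg ha hx) (sub_nonneg.2 hsx)]

lemma neg_mul_sqrt_le_mul_add_mul {A B d₁ d₂ r : ℝ} (hr : 0 ≤ r)
    (hd : d₁ ^ 2 + d₂ ^ 2 ≤ r ^ 2) :
    -(r * √(A ^ 2 + B ^ 2)) ≤ A * d₁ + B * d₂ := by
  have hS := Real.sq_sqrt (add_nonneg (sq_nonneg A) (sq_nonneg B))
  refine (abs_le_of_sq_le_sq' ?_ (by positivity)).1
  nlinarith [sq_nonneg (A * d₂ - B * d₁), sq_nonneg A, sq_nonneg B]


lemma upper_edge_of_mem_disk (hb : 0 ≤ b) (hba : b ≤ a) (hab : 7 ≤ a + b) (hm : 7 ≤ m)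
    (hx : 0 ≤ x) (hx' : 0 ≤ x') (hxm : x ^ 2 + a ^ 2 ≤ m ^ 2)
    (hd : (ξ - (m + x + x') / 4) ^ 2 + (η - (a - b) / 4) ^ 2 ≤ (283 / 200) ^ 2) :
    x * η ≤ a * ξ := by
  have hcs := neg_mul_sqrt_le_mul_add_mul (A := a) (B := -x) (by norm_num) hd
  rw [neg_sq, add_comm (a ^ 2)] at hcs
  nlinarith [upper_edge_margin hb hba hab hm hx hxm, mul_nonneg (hb.trans hba) hx']

lemma lower_edge_of_mem_disk (hb : 0 ≤ b) (hba : b ≤ a) (hab : 7 ≤ a + b) (hm : 7 ≤ m)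
    (hmab : a + b ≤ m) (hx : 0 ≤ x) (hx' : 0 ≤ x') (hx'm : x' ^ 2 + b ^ 2 ≤ m ^ 2)
    (hd : (ξ - (m + x + x') / 4) ^ 2 + (η - (a - b) / 4) ^ 2 ≤ (283 / 200) ^ 2) :
    x' * -η ≤ b * ξ := by
  have hcs := neg_mul_sqrt_le_mul_add_mul (A := b) (B := x') (by norm_num) hd
  rw [add_comm (b ^ 2)] at hcs
  nlinarith [lower_edge_margin hb hba hab hm hmab hx' hx'm, mul_nonneg hb hx]

end MarginInequalities

/-- `(ξ, η)` lies in the triangle with vertices `(0, 0)`, `(m, 0)` and `(x, a)`. -/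
def InTriangle (m x a ξ η : ℝ) : Prop :=
  0 < a ∧ 0 ≤ η ∧ x * η ≤ a * ξ ∧ (m - x) * η ≤ a * (m - ξ)

lemma inTriangle_or_inTriangle_of_mem_disk {m a b x x' ξ η : ℝ} (hm : 7 ≤ m) (ha : 0 ≤ a)
    (hb : 0 ≤ b) (hab : 7 ≤ a + b) (hmab : a + b ≤ m)
    (h₁ : x ^ 2 + a ^ 2 ≤ m ^ 2) (h₂ : (m - x) ^ 2 + a ^ 2 ≤ m ^ 2)
    (h₃ : x' ^ 2 + b ^ 2 ≤ m ^ 2) (h₄ : (m - x') ^ 2 + b ^ 2 ≤ m ^ 2)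
    (hd : (ξ - (m + x + x') / 4) ^ 2 + (η - (a - b) / 4) ^ 2 ≤ (283 / 200) ^ 2) :
    InTriangle m x a ξ η ∨ InTriangle m x' b ξ (-η) := by
  wlog hba : b ≤ a generalizing a b x x' η
  · have := this (η := -η) hb ha (by linarith) (by linarith) h₃ h₄ h₁ h₂
      (by linear_combination hd) (by linarith)
    rwa [neg_neg, or_comm] at this
  have hx : 0 ≤ x := by nlinarith
  have hxm : x ≤ m := by nlinarith
  have hx' : 0 ≤ x' := by nlinarith
  have hx'm : x' ≤ m := by nlinarith
  -- the reflection `ξ ↦ m - ξ` swaps the edges through `(0, 0)` and through `(m, 0)`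
  have hd' : (m - ξ - (m + (m - x) + (m - x')) / 4) ^ 2 + (η - (a - b) / 4) ^ 2 ≤
      (283 / 200) ^ 2 := by
    linear_combination hd
  rcases le_or_gt 0 η with hη | hη
  · exact .inl ⟨by linarith, hη, upper_edge_of_mem_disk hb hba hab hm hx hx' h₁ hd,
      upper_edge_of_mem_disk hb hba hab hm (sub_nonneg.2 hxm) (sub_nonneg.2 hx'm) h₂ hd'⟩
  · have hab' : a - b < 283 / 50 := by nlinarith
    exact .inr ⟨by linarith, by linarith,
      lower_edge_of_mem_disk hb hba hab hm hmab hx hx' h₃ hd,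
      lower_edge_of_mem_disk hb hba hab hm hmab (sub_nonneg.2 hxm) (sub_nonneg.2 hx'm) h₄ hd'⟩

lemma Convex.add_smul_add_smul_mem {E : Type*} [AddCommGroup E] [Module ℝ E] {X : Set E}
    (hX : Convex ℝ X) {p u v : E} {m x a ξ η : ℝ} (hm : 0 < m) (ht : InTriangle m x a ξ η)
    (hp : p ∈ X) (hq : p + m • u ∈ X) (hz : p + x • u + a • v ∈ X) :
    p + ξ • u + η • v ∈ X := by
  obtain ⟨ha, h₀, h₁, h₂⟩ := ht
  have hw₁ : 0 ≤ (a * (m - ξ) - (m - x) * η) / (a * m) := div_nonneg (by linarith) (by positivity)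
  have hw₂ : 0 ≤ (a * ξ - x * η) / (a * m) := div_nonneg (by linarith) (by positivity)
  have hw₃ : 0 ≤ η / a := div_nonneg h₀ ha.le
  -- barycentric coordinates with respect to the three vertices
  have key := hX.sum_mem (t := Finset.univ)
    (w := ![(a * (m - ξ) - (m - x) * η) / (a * m), (a * ξ - x * η) / (a * m), η / a])
    (z := ![p, p + m • u, p + x • u + a • v])
    (fun i _ => by fin_cases i <;> simpa)
    (by simp only [Fin.sum_univ_three, Matrix.cons_val]; field_simp; ring)
    (fun i _ => by fin_cases i <;> simpa)
  convert key using 1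
  simp only [Fin.sum_univ_three, Matrix.cons_val]
  match_scalars <;> field_simp <;> ring

section PlaneCoordinates

lemma Plane.inner_eq (w z : Plane) : ⟪w, z⟫ = w 0 * z 0 + w 1 * z 1 := by
  simp only [PiLp.inner_apply, RCLike.inner_apply, Real.ringHom_apply, Fin.sum_univ_two]
  ring

lemma Plane.norm_sq_eq (w : Plane) : ‖w‖ ^ 2 = w 0 ^ 2 + w 1 ^ 2 := by
  simp [EuclideanSpace.norm_sq_eq, Fin.sum_univ_two]

def rot90 (u : Plane) : Plane := !₂[-u 1, u 0]

lemma norm_rot90 (u : Plane) : ‖rot90 u‖ = ‖u‖ := by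
  rw [← sq_eq_sq₀ (norm_nonneg _) (norm_nonneg _), Plane.norm_sq_eq, Plane.norm_sq_eq]
  simp only [rot90, Matrix.cons_val_zero, Matrix.cons_val_one, Matrix.cons_val_fin_one, neg_sq]
  ring

def planeCoord (p u : Plane) (ξ η : ℝ) : Plane := p + ξ • u + η • rot90 u

variable {p u : Plane}

lemma dist_planeCoord_sq (hu : ‖u‖ = 1) (ξ η ξ' η' : ℝ) :
    dist (planeCoord p u ξ η) (planeCoord p u ξ' η') ^ 2 = (ξ - ξ') ^ 2 + (η - η') ^ 2 := by
  have h := Plane.norm_sq_eq u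
  rw [hu] at h
  rw [dist_eq_norm, Plane.norm_sq_eq]
  simp only [planeCoord, rot90, PiLp.sub_apply, PiLp.add_apply, PiLp.smul_apply, smul_eq_mul,
    Matrix.cons_val_zero, Matrix.cons_val_one, Matrix.cons_val_fin_one]
  linear_combination (-(ξ - ξ') ^ 2 - (η - η') ^ 2) * h

lemma planeCoord_inner (hu : ‖u‖ = 1) (w : Plane) :
    planeCoord p u ⟪w - p, u⟫ ⟪w - p, rot90 u⟫ = w := by
  have h := Plane.norm_sq_eq u
  rw [hu] at h
  ext i
  fin_cases i <;>
    simp only [planeCoord, rot90, Plane.inner_eq, PiLp.sub_apply, PiLp.add_apply, PiLp.smul_apply,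
      smul_eq_mul, Matrix.cons_val_zero, Matrix.cons_val_one, Matrix.cons_val_fin_one, Fin.zero_eta,
      Fin.mk_one]
  · linear_combination (p 0 - w 0) * h
  · linear_combination (p 1 - w 1) * h

lemma closedBall_subset_of_forall_dist_le {X : Set Plane} (hX : Convex ℝ X) (hu : ‖u‖ = 1)
    {m a b x x' : ℝ} (hm : 7 ≤ m) (ha : 0 ≤ a) (hb : 0 ≤ b) (hab : 7 ≤ a + b)
    (hdiam : ∀ w₁ ∈ X, ∀ w₂ ∈ X, dist w₁ w₂ ≤ m) (hp : planeCoord p u 0 0 ∈ X)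
    (hq : planeCoord p u m 0 ∈ X) (hzp : planeCoord p u x a ∈ X)
    (hzm : planeCoord p u x' (-b) ∈ X) :
    Metric.closedBall (planeCoord p u ((m + x + x') / 4) ((a - b) / 4)) (283 / 200) ⊆ X := by
  have hsq : ∀ {ξ η ξ' η' : ℝ}, planeCoord p u ξ η ∈ X → planeCoord p u ξ' η' ∈ X →
      (ξ - ξ') ^ 2 + (η - η') ^ 2 ≤ m ^ 2 := fun h h' => by
    rw [← dist_planeCoord_sq hu]
    exact pow_le_pow_left₀ dist_nonneg (hdiam _ h _ h') 2
  have hmab : a + b ≤ m := by nlinarith [hsq hzp hzm]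
  intro w hw
  rw [← planeCoord_inner (p := p) hu w] at hw ⊢
  have hd := pow_le_pow_left₀ dist_nonneg (Metric.mem_closedBall.1 hw) 2
  rw [dist_planeCoord_sq hu] at hd
  rcases inTriangle_or_inTriangle_of_mem_disk hm ha hb hab hmab (by linear_combination hsq hzp hp)
    (by linear_combination hsq hzp hq) (by linear_combination hsq hzm hp)
    (by linear_combination hsq hzm hq) hd with ht | ht
  · simp only [planeCoord, zero_smul, add_zero] at hp hq hzp ⊢
    exact hX.add_smul_add_smul_mem (by linarith) ht hp hq hzp
  · -- the lower triangle, in the frame `(u, -rot90 u)`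
    simp only [planeCoord, zero_smul, add_zero, neg_smul, ← smul_neg] at hp hq hzm ⊢
    rw [← neg_neg ⟪w - p, rot90 u⟫, neg_smul, ← smul_neg]
    exact hX.add_smul_add_smul_mem (by linarith) ht hp hq hzm

end PlaneCoordinates

lemma IsCompact.exists_forall_dist_le {α : Type*} [PseudoMetricSpace α] {K : Set α}
    (hK : IsCompact K) (hne : K.Nonempty) :
    ∃ p ∈ K, ∃ q ∈ K, ∀ w₁ ∈ K, ∀ w₂ ∈ K, dist w₁ w₂ ≤ dist p q := by
  obtain ⟨⟨p, q⟩, ⟨hp, hq⟩, h⟩ :=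
    (hK.prod hK).exists_isMaxOn (hne.prod hne) continuous_dist.continuousOn
  exact ⟨p, hp, q, hq, fun w₁ h₁ w₂ h₂ => h (Set.mk_mem_prod h₁ h₂)⟩

section Extent

variable {E : Type*} [NormedAddCommGroup E] [InnerProductSpace ℝ E] {K : Set E}

def extent (K : Set E) (u : E) : ℝ :=
  sSup ((fun p => ⟪p, u⟫) '' K) - sInf ((fun p => ⟪p, u⟫) '' K)

lemma IsCompact.exists_extent_eq (hK : IsCompact K) (hne : K.Nonempty) (u : E) :
    ∃ w₁ ∈ K, ∃ w₂ ∈ K, (∀ y ∈ K, ⟪y, u⟫ ≤ ⟪w₁, u⟫) ∧ (∀ y ∈ K, ⟪w₂, u⟫ ≤ ⟪y, u⟫) ∧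
      extent K u = ⟪w₁ - w₂, u⟫ := by
  have hc : IsCompact ((fun p => ⟪p, u⟫) '' K) := hK.image (by fun_prop)
  obtain ⟨w₁, h₁, hw₁⟩ := hc.sSup_mem (hne.image _)
  obtain ⟨w₂, h₂, hw₂⟩ := hc.sInf_mem (hne.image _)
  refine ⟨w₁, h₁, w₂, h₂, fun y hy => ?_, fun y hy => ?_, ?_⟩
  · exact (le_csSup hc.bddAbove (Set.mem_image_of_mem _ hy)).trans_eq hw₁.symm
  · exact hw₂.trans_le (csInf_le hc.bddBelow (Set.mem_image_of_mem _ hy))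
  · rw [extent, ← hw₁, ← hw₂, inner_sub_left]

lemma extent_nonneg (hK : IsCompact K) (hne : K.Nonempty) (u : E) : 0 ≤ extent K u := by
  obtain ⟨w₁, -, w₂, h₂, hmax, -, h⟩ := hK.exists_extent_eq hne u
  rw [h, inner_sub_left, sub_nonneg]
  exact hmax w₂ h₂

lemma extent_le_of_forall_dist_le (hK : IsCompact K) (hne : K.Nonempty) {m : ℝ}
    (hdiam : ∀ w₁ ∈ K, ∀ w₂ ∈ K, dist w₁ w₂ ≤ m) {u : E} (hu : ‖u‖ = 1) : extent K u ≤ m := by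
  obtain ⟨w₁, h₁, w₂, h₂, -, -, h⟩ := hK.exists_extent_eq hne u
  calc extent K u = ⟪w₁ - w₂, u⟫ := h
    _ ≤ ‖w₁ - w₂‖ * ‖u‖ := real_inner_le_norm _ _
    _ ≤ m := by rw [hu, mul_one, ← dist_eq_norm]; exact hdiam w₁ h₁ w₂ h₂

end Extent

lemma lt_extent_of_lt_width {K : Set Plane} (hK : IsCompact K) (hne : K.Nonempty) {c : ℝ}
    (h : c < width K) {u : Plane} (hu : ‖u‖ = 1) : c < extent K u :=
  h.trans_le <| csInf_le ⟨0, by rintro _ ⟨v, -, rfl⟩; exact extent_nonneg hK hne v⟩ ⟨u, hu, rfl⟩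

lemma exists_closedBall_subset_of_seven_lt_width {X : Set Plane} (hXc : IsCompact X)
    (hX : Convex ℝ X) (hne : X.Nonempty) (hw : 7 < width X) :
    ∃ c, Metric.closedBall c (283 / 200) ⊆ X := by
  obtain ⟨p, hp, q, hq, hdiam⟩ := hXc.exists_forall_dist_le hne
  set m := dist p q
  have he : ‖EuclideanSpace.single (0 : Fin 2) (1 : ℝ)‖ = 1 := by simp
  have hm : 7 < m :=
    (lt_extent_of_lt_width hXc hne hw he).trans_le (extent_le_of_forall_dist_le hXc hne hdiam he)
  set u : Plane := m⁻¹ • (q - p)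
  have hu : ‖u‖ = 1 := by
    rw [norm_smul, ← dist_eq_norm', norm_inv, Real.norm_of_nonneg dist_nonneg,
      inv_mul_cancel₀ (by linarith)]
  have hq' : planeCoord p u m 0 = q := by
    simp [planeCoord, u, smul_smul, mul_inv_cancel₀ (by linarith : m ≠ 0)]
  set v := rot90 u
  obtain ⟨zp, hzp, zm, hzm, hmax, hmin, hext⟩ := hXc.exists_extent_eq hne v
  have hab : 7 < ⟪zp - p, v⟫ + ⟪p - zm, v⟫ := by
    have := lt_extent_of_lt_width hXc hne hw ((norm_rot90 u).trans hu)
    rw [hext] at this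
    simpa [inner_sub_left] using this
  have hzm' : planeCoord p u ⟪zm - p, u⟫ (-⟪p - zm, v⟫) ∈ X := by
    rwa [← inner_neg_left, neg_sub, planeCoord_inner hu]
  refine ⟨_, closedBall_subset_of_forall_dist_le hX hu hm.le ?_ ?_ hab.le hdiam
    (by simpa [planeCoord] using hp) (hq' ▸ hq) ((planeCoord_inner hu zp).symm ▸ hzp) hzm'⟩
  · simpa [inner_sub_left] using hmax p hp
  · simpa [inner_sub_left] using hmin p hp

lemma dist_le_sqrt_two_of_mem_unitSquare {z z' : Plane} (hz : z ∈ unitSquare)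
    (hz' : z' ∈ unitSquare) : dist z z' ≤ √2 := by
  rw [EuclideanSpace.dist_eq, Fin.sum_univ_two]
  gcongr
  have h₀ := hz 0; have h₁ := hz 1; have h₀' := hz' 0; have h₁' := hz' 1
  simp only [Set.mem_Icc] at h₀ h₁ h₀' h₁'
  rw [Real.dist_eq, Real.dist_eq, sq_abs, sq_abs]
  nlinarith

lemma ContainedUnderTranslation.dist_le_sqrt_two {S : Set Plane}
    (h : ContainedUnderTranslation S unitSquare) {z z' : Plane} (hz : z ∈ S) (hz' : z' ∈ S) :
    dist z z' ≤ √2 := by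
  obtain ⟨v, hv⟩ := h
  simpa using dist_le_sqrt_two_of_mem_unitSquare (hv (Set.vadd_mem_vadd_set hz))
    (hv (Set.vadd_mem_vadd_set hz'))

lemma ContainedUnderTranslation.vadd {A B : Set Plane} (h : ContainedUnderTranslation A B)
    (t : Plane) : ContainedUnderTranslation (t +ᵥ A) B := by
  obtain ⟨v, hv⟩ := h
  exact ⟨v - t, by rwa [vadd_vadd, sub_add_cancel]⟩

lemma nonempty_of_not_containedUnderTranslation {A B : Set Plane}
    (h : ¬ ContainedUnderTranslation A B) : A.Nonempty :=
  Set.nonempty_iff_ne_empty.2 fun hA => h ⟨0, by simp [hA]⟩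

lemma containedUnderTranslation_of_closedBall_subset {X Y : Set Plane} (hY : Convex ℝ Y)
    {c : Plane} {r d : ℝ} (hd : 0 ≤ d) (hdr : d < r) (hball : Metric.closedBall c r ⊆ X)
    (hsmall : ∀ t : Plane, ∀ z ∈ X ∩ (t +ᵥ Y), ∀ z' ∈ X ∩ (t +ᵥ Y), dist z z' ≤ d) :
    ContainedUnderTranslation Y X := by
  have hshift : ∀ y y₀ : Plane, dist (c - y₀ + y) c = dist y y₀ := fun y y₀ => by
    rw [← dist_add_left (c - y₀) y y₀, sub_add_cancel]
  have hnear : ∀ y₁ ∈ Y, ∀ y₂ ∈ Y, dist y₁ y₂ ≤ r → dist y₁ y₂ ≤ d := by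
    intro y₁ h₁ y₂ h₂ h
    have hmem : ∀ y ∈ Y, dist y y₁ ≤ r → c - y₁ + y ∈ X ∩ ((c - y₁) +ᵥ Y) := fun y hy hyr =>
        ⟨hball (by rwa [Metric.mem_closedBall, hshift]), Set.vadd_mem_vadd_set hy⟩
    have := hsmall _ _ (hmem y₁ h₁ (by simpa using hd.trans hdr.le)) _
      (hmem y₂ h₂ (by rwa [dist_comm]))
    rwa [dist_add_left] at this
  have hfar : ∀ y₁ ∈ Y, ∀ y₂ ∈ Y, dist y₁ y₂ ≤ d := by
    intro y₁ h₁ y₂ h₂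
    by_contra! hlt
    rcases le_or_gt (dist y₁ y₂) r with h | h
    · exact hlt.not_ge (hnear y₁ h₁ y₂ h₂ h)
    have hpos : 0 < dist y₁ y₂ := hd.trans_lt hlt
    have hr : 0 ≤ r / dist y₁ y₂ := div_nonneg (hd.trans hdr.le) hpos.le
    have hy := hY.lineMap_mem h₁ h₂ ⟨hr, (div_le_one hpos).2 h.le⟩
    have hdist : dist y₁ (AffineMap.lineMap y₁ y₂ (r / dist y₁ y₂)) = r := by
      rw [dist_comm, dist_lineMap_left, Real.norm_of_nonneg hr, div_mul_cancel₀ _ hpos.ne']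
    exact hdr.not_ge (hdist ▸ hnear y₁ h₁ _ hy hdist.le)
  rcases Y.eq_empty_or_nonempty with rfl | ⟨y₀, h₀⟩
  · exact ⟨0, by simp⟩
  refine ⟨c - y₀, ?_⟩
  rintro _ ⟨y, hy, rfl⟩
  exact hball ((hshift y y₀).trans_le ((hfar y hy y₀ h₀).trans hdr.le))

lemma width_le_seven {X Y : Set Plane} (hXc : IsCompact X) (hX : Convex ℝ X) (hY : Convex ℝ Y)
    (hne : X.Nonempty) (hYX : ¬ ContainedUnderTranslation Y X)
    (hsmall : ∀ t : Plane, ContainedUnderTranslation (X ∩ (t +ᵥ Y)) unitSquare) :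
    width X ≤ 7 := by
  by_contra! hw
  obtain ⟨c, hc⟩ := exists_closedBall_subset_of_seven_lt_width hXc hX hne hw
  refine hYX (containedUnderTranslation_of_closedBall_subset hY (Real.sqrt_nonneg 2) ?_ hc
    fun t _ hz _ hz' => (hsmall t).dist_le_sqrt_two hz hz')
  rw [Real.sqrt_lt' (by norm_num)]
  norm_num

theorem bounded_width_general (X Y : Set Plane)
    (hXcomp : IsCompact X) (hXconv : Convex ℝ X)
    (hYcomp : IsCompact Y) (hYconv : Convex ℝ Y)
    (hXY : ¬ ContainedUnderTranslation X Y)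
    (hYX : ¬ ContainedUnderTranslation Y X)
    (hsmall : ∀ t : Plane, ContainedUnderTranslation (X ∩ (t +ᵥ Y)) unitSquare) :
    width X ≤ 7 ∧ width Y ≤ 7 := by
  refine ⟨width_le_seven hXcomp hXconv hYconv (nonempty_of_not_containedUnderTranslation hXY) hYX
    hsmall, width_le_seven hYcomp hYconv hXconv (nonempty_of_not_containedUnderTranslation hYX)
    hXY fun t => ?_⟩
  have := (hsmall (-t)).vadd t
  rwa [Set.vadd_set_inter, vadd_neg_vadd, Set.inter_comm] at this

theorem bounded_width (X Y : Set Plane)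
    (hXcomp : IsCompact X) (hXconv : Convex ℝ X) (hXint : (interior X).Nonempty)
    (hYcomp : IsCompact Y) (hYconv : Convex ℝ Y) (hYint : (interior Y).Nonempty)
    (hXY : ¬ ContainedUnderTranslation X Y)
    (hYX : ¬ ContainedUnderTranslation Y X)
    (hsmall : ∀ t : Plane, ContainedUnderTranslation (X ∩ (t +ᵥ Y)) unitSquare) :
    width X ≤ 7 ∧ width Y ≤ 7 :=
  bounded_width_general X Y hXcomp hXconv hYcomp hYconv hXY hYX hsmall
end
end
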